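/- (Triangle-type bound for empirical-to-true divergence) For probability distributions D_t, D_s with empirical distributions D̂_t, D̂_s (uniform distributions over i.i.d. samples of sizes n_t and n_s respectively), the HΔH-divergence satisfies, with probability at least 1 − δ, d_{HΔH}(D_t, D_s) ≤ d_{HΔH}(D̂_t, D̂_s) + 4(Rad_{D̂_s}(H) + Rad_{D̂_t}(H)) + 6(√(log(2/δ)/(2 n_s)) + √(log(2/δ)/(2 n_t))), using the triangle inequality d_{HΔH}(D_t,D_s) ≤ d_{HΔH}(D_t,D̂_t) + d_{HΔH}(D̂_t,D̂_s) + d_{HΔH}(D̂_s,D_s) together with uniform convergence bounds for each empirical-to-true term. -/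

import Mathlib

open MeasureTheory

/-- Empirical Rademacher complexity of a class of real-valued functions on a
sample `x` of size `n`. -/
noncomputable def rad {X : Type*} (n : ℕ) (x : Fin n → X) (F : Set (X → ℝ)) : ℝ :=
  (1 / 2 ^ n : ℝ) * ∑ σ : Fin n → Bool,
    ⨆ f : F, (1 / n : ℝ) * ∑ i, (if σ i then (1 : ℝ) else -1) * (f : X → ℝ) (x i)

/-- The HΔH-divergence d_{HΔH}(D,D') = 2 sup over sets {h ≠ h'}, h,h' ∈ H,
of the absolute difference in measures. -/
noncomputable def dHdH {X : Type*} [MeasurableSpace X] (H : Set (X → ℝ))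
    (D D' : Measure X) : ℝ :=
  2 * ⨆ p : H × H,
    |(D {x | (p.1 : X → ℝ) x ≠ (p.2 : X → ℝ) x}).toReal -
      (D' {x | (p.1 : X → ℝ) x ≠ (p.2 : X → ℝ) x}).toReal|

/-- The empirical (uniform) measure of a sample. -/
noncomputable def emp {X : Type*} [MeasurableSpace X] {n : ℕ} (Q : Fin n → X) :
    Measure X :=
  (n : ENNReal)⁻¹ • ∑ i, Measure.dirac (Q i)

/-! The true divergence `dHdH H Dt Ds` is a fixed number, so up to `2 (εt + εs)` it is attained
at a single pair `(h, h')`, i.e. at a single set `A = {h ≠ h'}`, where `ε = √(log (2/δ) / (2n))`.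
By Hoeffding's inequality each sample misestimates the frequency of this one set by `2 ε` or more
with probability at most `2 exp (-8 n ε²) ≤ δ / 2`. Off these two events the triangle inequality
at `A` gives the bound with `6 (εt + εs)`; the Rademacher terms are nonnegative slack. -/

open ProbabilityTheory Real

section

variable {X : Type*}

lemma rad_nonneg {n : ℕ} (x : Fin n → X) {H : Set (X → ℝ)} {C : ℝ}
    (hH : ∀ h ∈ H, ∀ a, |h a| ≤ C) : 0 ≤ rad n x H := by
  set g : (Fin n → Bool) → H → ℝ :=
    fun σ f => (1 / n : ℝ) * ∑ i, (if σ i then (1 : ℝ) else -1) * (f : X → ℝ) (x i)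
  have hg_flip (σ : Fin n → Bool) (f : H) : g (not ∘ σ) f = -g σ f := by
    simp only [g, ← mul_neg, ← Finset.sum_neg_distrib]
    congr 1; refine Finset.sum_congr rfl fun i _ => ?_
    cases h : σ i <;> simp [h]
  have hg_bdd (σ : Fin n → Bool) : BddAbove (Set.range (g σ)) := by
    refine ⟨(1 / n : ℝ) * ∑ _i : Fin n, C, Set.forall_mem_range.mpr fun f => ?_⟩
    refine mul_le_mul_of_nonneg_left (Finset.sum_le_sum fun i _ => ?_) (by positivity)
    have hsign : |(if σ i then (1 : ℝ) else -1)| = 1 := by split_ifs <;> simp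
    calc _ ≤ |(if σ i then (1 : ℝ) else -1) * (f : X → ℝ) (x i)| := le_abs_self _
      _ = |(f : X → ℝ) (x i)| := by rw [abs_mul, hsign, one_mul]
      _ ≤ C := hH f f.2 (x i)
  have hflip : Function.Involutive (fun σ : Fin n → Bool => not ∘ σ) := fun σ => by
    funext i; simp
  refine mul_nonneg (by positivity) ?_
  change 0 ≤ ∑ σ, ⨆ f, g σ f
  rcases isEmpty_or_nonempty H with hH0 | hne
  · simp [Real.iSup_of_isEmpty]
  obtain ⟨f₀⟩ := hne
  suffices 0 ≤ ∑ σ, ((⨆ f, g σ f) + ⨆ f, g (not ∘ σ) f) by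
    rwa [Finset.sum_add_distrib, Fintype.sum_bijective _ hflip.bijective
      (fun σ => ⨆ f, g (not ∘ σ) f) (fun σ => ⨆ f, g σ f) fun _ => rfl,
      ← two_mul, mul_nonneg_iff_of_pos_left two_pos] at this
  refine Finset.sum_nonneg fun σ _ => ?_
  calc (0 : ℝ) = g σ f₀ + g (not ∘ σ) f₀ := by rw [hg_flip]; ring
    _ ≤ _ := add_le_add (le_ciSup (hg_bdd σ) f₀) (le_ciSup (hg_bdd _) f₀)

variable [MeasurableSpace X]

lemma isProbabilityMeasure_emp {n : ℕ} (hn : 0 < n) (Q : Fin n → X) :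
    IsProbabilityMeasure (emp Q) := by
  constructor
  simp [emp, ENNReal.inv_mul_cancel, hn.ne']

lemma emp_real_apply {n : ℕ} (Q : Fin n → X) {A : Set X} (hA : MeasurableSet A) :
    (emp Q).real A = (∑ i, A.indicator 1 (Q i)) / n := by
  have h_indicator (x : X) :
      A.indicator (1 : X → ENNReal) x = ENNReal.ofReal (A.indicator 1 x) := by
    by_cases h : x ∈ A <;> simp [h]
  simp only [emp, Measure.real, Measure.smul_apply, Measure.finsetSum_apply,
    Measure.dirac_apply' _ hA, h_indicator, smul_eq_mul, ENNReal.toReal_mul, ENNReal.toReal_inv,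
    ENNReal.toReal_natCast, div_eq_inv_mul, ENNReal.toReal_sum fun _ _ => ENNReal.ofReal_ne_top]
  simp [Set.indicator_nonneg]

lemma hasSubgaussianMGF_indicator_sub (D : Measure X) [IsProbabilityMeasure D] {A : Set X}
    (hA : MeasurableSet A) :
    HasSubgaussianMGF (fun x => A.indicator 1 x - D.real A) (1 / 4) D := by
  have h := hasSubgaussianMGF_of_mem_Icc (μ := D) (a := 0) (b := 1)
    (measurable_one.indicator hA).aemeasurable
    (ae_of_all _ fun x => by by_cases h : x ∈ A <;> simp [h])
  norm_num [integral_indicator_one hA] at h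
  exact h

lemma hasSubgaussianMGF_sum_indicator_sub (D : Measure X) [IsProbabilityMeasure D] {A : Set X}
    (hA : MeasurableSet A) (n : ℕ) :
    HasSubgaussianMGF (fun Q : Fin n → X => ∑ i, (A.indicator 1 (Q i) - D.real A)) (n / 4)
      (Measure.pi fun _ => D) := by
  have h := HasSubgaussianMGF.sum_of_iIndepFun (s := Finset.univ) (μ := Measure.pi fun _ => D)
    (iIndepFun_pi (μ := fun _ : Fin n => D) (X := fun _ x => A.indicator 1 x - D.real A)
      fun _ => ((measurable_one.indicator hA).sub_const _).aemeasurable)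
    fun i _ => HasSubgaussianMGF.of_map (measurable_pi_apply i).aemeasurable
      (by rw [(measurePreserving_eval (fun _ : Fin n => D) i).map_eq]
          exact hasSubgaussianMGF_indicator_sub D hA)
  simpa [div_eq_mul_inv] using h

lemma measureReal_abs_emp_sub_ge_le (D : Measure X) [IsProbabilityMeasure D] {A : Set X}
    (hA : MeasurableSet A) {n : ℕ} (hn : 0 < n) {τ : ℝ} (hτ : 0 ≤ τ) :
    (Measure.pi fun _ : Fin n => D).real {Q | τ ≤ |(emp Q).real A - D.real A|}
      ≤ 2 * exp (-2 * n * τ ^ 2) := by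
  set μ := Measure.pi fun _ : Fin n => D
  set S := fun Q : Fin n → X => ∑ i, (A.indicator 1 (Q i) - D.real A)
  have hn' : (0 : ℝ) < n := Nat.cast_pos.mpr hn
  have hS (Q : Fin n → X) : S Q = n * ((emp Q).real A - D.real A) := by
    rw [emp_real_apply Q hA, mul_sub, mul_div_cancel₀ _ hn'.ne']
    simp [S, Finset.sum_sub_distrib]
  have h_tail {Y : (Fin n → X) → ℝ} (hY : HasSubgaussianMGF Y (n / 4) μ) :
      μ.real {Q | n * τ ≤ Y Q} ≤ exp (-2 * n * τ ^ 2) :=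
    (hY.measure_ge_le (by positivity)).trans_eq (by congr 1; push_cast; field_simp; ring)
  have hS_subG := hasSubgaussianMGF_sum_indicator_sub D hA n
  calc μ.real {Q | τ ≤ |(emp Q).real A - D.real A|}
      ≤ μ.real ({Q | n * τ ≤ S Q} ∪ {Q | n * τ ≤ (-S) Q}) := by
        refine measureReal_mono fun Q hQ => ?_
        simp only [Set.mem_ofPred_eq, Set.mem_union, Pi.neg_apply, hS] at hQ ⊢
        rcases le_abs'.mp hQ with h | h
        · right; nlinarith
        · left; nlinarith
    _ ≤ exp (-2 * n * τ ^ 2) + exp (-2 * n * τ ^ 2) :=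
        (measureReal_union_le _ _).trans (add_le_add (h_tail hS_subG) (h_tail hS_subG.neg))
    _ = 2 * exp (-2 * n * τ ^ 2) := (two_mul _).symm

lemma two_mul_exp_neg_two_mul_sq_le {n : ℕ} (hn : 0 < n) {δ : ℝ} (hδ₀ : 0 < δ) (hδ₁ : δ < 1) :
    2 * exp (-2 * n * (2 * √(log (2 / δ) / (2 * n))) ^ 2) ≤ δ / 2 := by
  have hn' : (0 : ℝ) < n := Nat.cast_pos.mpr hn
  have hL : 0 < log (2 / δ) := log_pos (by rw [lt_div_iff₀ hδ₀]; linarith)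
  have h_exp : exp (-log (2 / δ)) = δ / 2 := by
    rw [exp_neg, exp_log (by positivity), inv_div]
  calc 2 * exp (-2 * n * (2 * √(log (2 / δ) / (2 * n))) ^ 2)
      = 2 * exp (-log (2 / δ)) ^ 4 := by
        rw [mul_pow, sq_sqrt (by positivity), ← exp_nat_mul]
        field_simp
        ring_nf
    _ = 2 * (δ / 2) ^ 4 := by rw [h_exp]
    _ ≤ δ / 2 := by nlinarith [pow_le_one₀ hδ₀.le hδ₁.le (n := 3)]

lemma ofReal_one_sub_le_measure_prod {α β : Type*} [MeasurableSpace α] [MeasurableSpace β]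
    {μ : Measure α} {ν : Measure β} [IsProbabilityMeasure μ] [IsProbabilityMeasure ν]
    {s : Set α} {t : Set β} {δ : ℝ} (hst : μ.real s + ν.real t ≤ δ) {S : Set (α × β)}
    (hS : ∀ a b, a ∉ s → b ∉ t → (a, b) ∈ S) :
    ENNReal.ofReal (1 - δ) ≤ μ.prod ν S := by
  have hSc : Sᶜ ⊆ s ×ˢ .univ ∪ .univ ×ˢ t := by
    rintro ⟨a, b⟩ hab
    by_contra h
    simp only [Set.mem_union, Set.mem_prod, Set.mem_univ, and_true, true_and, not_or] at h
    exact hab (hS a b h.1 h.2)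
  have h_univ := measureReal_union_le (μ := μ.prod ν) S Sᶜ
  have h_compl := (measureReal_mono (μ := μ.prod ν) hSc).trans (measureReal_union_le _ _)
  simp only [Set.union_compl_self, probReal_univ, measureReal_prod_prod, mul_one, one_mul]
    at h_univ h_compl
  exact ENNReal.ofReal_le_of_le_toReal (by rw [← Measure.real]; linarith)

def disagreementSet (h h' : X → ℝ) : Set X := {x | h x ≠ h' x}

lemma measurableSet_disagreementSet {h h' : X → ℝ} (hh : Measurable h) (hh' : Measurable h') :
    MeasurableSet (disagreementSet h h') :=
  (measurableSet_eq_fun hh hh').compl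

lemma dHdH_eq (H : Set (X → ℝ)) (D D' : Measure X) : dHdH H D D' =
    2 * ⨆ p : H × H, |D.real (disagreementSet p.1 p.2) - D'.real (disagreementSet p.1 p.2)| :=
  rfl

lemma two_mul_abs_sub_le_dHdH {H : Set (X → ℝ)} (D D' : Measure X) [IsFiniteMeasure D]
    [IsFiniteMeasure D'] (p : H × H) :
    2 * |D.real (disagreementSet p.1 p.2) - D'.real (disagreementSet p.1 p.2)| ≤ dHdH H D D' := by
  rw [dHdH_eq]
  gcongr
  apply le_ciSup ⟨D.real .univ + D'.real .univ, ?_⟩ p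
  rintro _ ⟨q, rfl⟩
  refine (abs_sub _ _).trans ?_
  simp only [abs_of_nonneg measureReal_nonneg]
  exact add_le_add (measureReal_mono (Set.subset_univ _)) (measureReal_mono (Set.subset_univ _))

lemma exists_dHdH_lt_two_mul_abs_sub_add {H : Set (X → ℝ)} [Nonempty H] (D D' : Measure X)
    {ε : ℝ} (hε : 0 < ε) : ∃ p : H × H,
    dHdH H D D' < 2 * |D.real (disagreementSet p.1 p.2) - D'.real (disagreementSet p.1 p.2)| + ε := by
  have h : dHdH H D D' / 2 - ε / 2 < ⨆ p : H × H,
      |D.real (disagreementSet p.1 p.2) - D'.real (disagreementSet p.1 p.2)| := by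
    rw [dHdH_eq]; linarith
  obtain ⟨p, hp⟩ := exists_lt_of_lt_ciSup h
  exact ⟨p, by linarith⟩

lemma dHdH_le_dHdH_add_of_abs_sub_lt {H : Set (X → ℝ)} {D₁ D₂ D₁' D₂' : Measure X}
    [IsFiniteMeasure D₁'] [IsFiniteMeasure D₂'] (p : H × H) {τ₁ τ₂ ε : ℝ}
    (hp : dHdH H D₁ D₂ <
      2 * |D₁.real (disagreementSet p.1 p.2) - D₂.real (disagreementSet p.1 p.2)| + ε)
    (h₁ : |D₁'.real (disagreementSet p.1 p.2) - D₁.real (disagreementSet p.1 p.2)| < τ₁)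
    (h₂ : |D₂'.real (disagreementSet p.1 p.2) - D₂.real (disagreementSet p.1 p.2)| < τ₂) :
    dHdH H D₁ D₂ ≤ dHdH H D₁' D₂' + 2 * (τ₁ + τ₂) + ε := by
  have h' := two_mul_abs_sub_le_dHdH D₁' D₂' p
  set A := disagreementSet (p.1 : X → ℝ) p.2
  have := abs_sub_le (D₁.real A) (D₁'.real A) (D₂.real A)
  have := abs_sub_le (D₁'.real A) (D₂'.real A) (D₂.real A)
  rw [abs_sub_comm] at h₁
  linarith

end

/-- Empirical-to-true divergence bound: with probability ≥ 1 − δ over the two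
i.i.d. samples,
d_{HΔH}(D_t,D_s) ≤ d_{HΔH}(D̂_t,D̂_s) + 4(Rad_{D̂_s}(H) + Rad_{D̂_t}(H))
  + 6(√(log(2/δ)/(2 n_s)) + √(log(2/δ)/(2 n_t))). -/
theorem stmt12 {X : Type*} [MeasurableSpace X] (Dt Ds : Measure X)
    [IsProbabilityMeasure Dt] [IsProbabilityMeasure Ds]
    (H : Set (X → ℝ)) (hm : ∀ h ∈ H, Measurable h)
    (hbin : ∀ h ∈ H, ∀ a, h a = 0 ∨ h a = 1)
    (nt ns : ℕ) (hnt : 0 < nt) (hns : 0 < ns)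
    (δ : ℝ) (hδ : δ ∈ Set.Ioo (0:ℝ) 1) :
    ENNReal.ofReal (1 - δ) ≤
      ((Measure.pi fun _ : Fin nt => Dt).prod (Measure.pi fun _ : Fin ns => Ds))
        {Q : (Fin nt → X) × (Fin ns → X) |
          dHdH H Dt Ds ≤ dHdH H (emp Q.1) (emp Q.2)
            + 4 * (rad ns Q.2 H + rad nt Q.1 H)
            + 6 * (Real.sqrt (Real.log (2 / δ) / (2 * ns))
              + Real.sqrt (Real.log (2 / δ) / (2 * nt)))} := by
  obtain ⟨hδ₀, hδ₁⟩ := hδ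
  set εt := √(log (2 / δ) / (2 * nt))
  set εs := √(log (2 / δ) / (2 * ns))
  have hε : 0 < εt + εs := by
    have : 0 < log (2 / δ) := log_pos (by rw [lt_div_iff₀ hδ₀]; linarith)
    positivity
  have hrad {n : ℕ} (Q : Fin n → X) : 0 ≤ rad n Q H :=
    rad_nonneg Q (C := 1) fun h hh a => by rcases hbin h hh a with h | h <;> simp [h]
  suffices ∃ (s : Set (Fin nt → X)) (t : Set (Fin ns → X)),
      (Measure.pi fun _ => Dt).real s ≤ δ / 2 ∧ (Measure.pi fun _ => Ds).real t ≤ δ / 2 ∧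
      ∀ Q₁ Q₂, Q₁ ∉ s → Q₂ ∉ t → dHdH H Dt Ds ≤ dHdH H (emp Q₁) (emp Q₂) + 6 * (εs + εt) by
    obtain ⟨s, t, hs, ht, hst⟩ := this
    refine ofReal_one_sub_le_measure_prod (by linarith) fun Q₁ Q₂ h₁ h₂ => ?_
    simp only [Set.mem_ofPred_eq]
    linarith [hst Q₁ Q₂ h₁ h₂, hrad Q₁, hrad Q₂]
  rcases isEmpty_or_nonempty H with hH | hH
  · refine ⟨∅, ∅, by simp; linarith, by simp; linarith, fun Q₁ Q₂ _ _ => ?_⟩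
    simp only [dHdH_eq, Real.iSup_of_isEmpty, mul_zero]
    linarith
  obtain ⟨p, hp⟩ := exists_dHdH_lt_two_mul_abs_sub_add (H := H) Dt Ds (mul_pos two_pos hε)
  set A := disagreementSet (p.1 : X → ℝ) p.2
  have hA : MeasurableSet A := measurableSet_disagreementSet (hm _ p.1.2) (hm _ p.2.2)
  refine ⟨{Q | 2 * εt ≤ |(emp Q).real A - Dt.real A|}, {Q | 2 * εs ≤ |(emp Q).real A - Ds.real A|},
    (measureReal_abs_emp_sub_ge_le Dt hA hnt (by positivity)).trans
      (two_mul_exp_neg_two_mul_sq_le hnt hδ₀ hδ₁),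
    (measureReal_abs_emp_sub_ge_le Ds hA hns (by positivity)).trans
      (two_mul_exp_neg_two_mul_sq_le hns hδ₀ hδ₁), fun Q₁ Q₂ h₁ h₂ => ?_⟩
  have := isProbabilityMeasure_emp hnt Q₁
  have := isProbabilityMeasure_emp hns Q₂
  linarith [dHdH_le_dHdH_add_of_abs_sub_lt p hp (not_le.mp h₁) (not_le.mp h₂)]
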